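/- Let X satisfy condition (Ha) with E|X| = ∞, and for x > 0 let ω_x(θ) = 1 - E[e^{iθX}; |X| < x]. Then as x → ∞, |ω_x'(θ)| = A(x)(1 + o(√(|θ|x))) uniformly for |θ| > 1/x, where the derivative is ω_x'(θ) = -i E[X e^{iθX}; |X| < x]. -/

import Mathlib

open MeasureTheory Filter Set Asymptotics Topology

/-- Tail of a distribution: `1 - F(x) = P[X > x]`. -/
noncomputable def tailF (μ : Measure ℝ) (x : ℝ) : ℝ := (μ (Set.Ioi x)).toReal

/-- A function is slowly varying at infinity. -/
def SlowlyVarying (f : ℝ → ℝ) : Prop :=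
  (∀ᶠ x in atTop, 0 < f x) ∧
    ∀ c : ℝ, 1 < c → Tendsto (fun x => f (c * x) / f x) atTop (𝓝 1)

/-- Two-sided tail `H(x) = P[|X| > x] = 1 - F(x) + F(-x-0)`. -/
noncomputable def Hf (μ : Measure ℝ) (x : ℝ) : ℝ := (μ {y : ℝ | x < |y|}).toReal

/-- `K(x) = P[X > x] - P[X < -x] = 1 - F(x) - F(-x-0)`. -/
noncomputable def Kf (μ : Measure ℝ) (x : ℝ) : ℝ :=
  (μ (Set.Ioi x)).toReal - (μ (Set.Iio (-x))).toReal

/-- `A(x) = ∫₀ˣ K(t) dt`. -/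
noncomputable def Af (μ : Measure ℝ) (x : ℝ) : ℝ := ∫ t in (0:ℝ)..x, Kf μ t

/-- `ℓ(x) = ∫₀ˣ H(t) dt`. -/
noncomputable def ellH (μ : Measure ℝ) (x : ℝ) : ℝ := ∫ t in (0:ℝ)..x, Hf μ t

/-- `m(x)`, defined by `1/m(x) = ∫ₓ^∞ H(t)/A²(t) dt`. -/
noncomputable def mF (μ : Measure ℝ) (x : ℝ) : ℝ :=
  (∫ t in Set.Ioi x, Hf μ t / (Af μ t) ^ 2)⁻¹

/-- `r₊(x) = ∫ₓ^∞ (1-F(t))/A²(t) dt`. -/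
noncomputable def rPlus (μ : Measure ℝ) (x : ℝ) : ℝ :=
  ∫ t in Set.Ioi x, tailF μ t / (Af μ t) ^ 2

/-- `r₋(x) = ∫ₓ^∞ F(-t)/A²(t) dt`. -/
noncomputable def rMinus (μ : Measure ℝ) (x : ℝ) : ℝ :=
  ∫ t in Set.Ioi x, (μ (Set.Iio (-t))).toReal / (Af μ t) ^ 2

/-- Condition (Ha): `A(x)/(x H(x)) → ∞`, i.e. positive relative stability. -/
def HaCond (μ : Measure ℝ) : Prop :=
  Tendsto (fun x => Af μ x / (x * Hf μ x)) atTop atTop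

/-- Condition (Hb): `∫_{x₀}^∞ H(x)/A²(x) dx < ∞` for some `x₀ > 0`
with `A` positive on `[x₀, ∞)`. -/
def HbCond (μ : Measure ℝ) : Prop :=
  ∃ x₀ : ℝ, 0 < x₀ ∧ (∀ x ≥ x₀, 0 < Af μ x) ∧
    IntegrableOn (fun x => Hf μ x / (Af μ x) ^ 2) (Set.Ioi x₀)

/-- `X` is arithmetic: `X/h ∈ ℤ` almost surely for some `h > 0`. -/
def IsArith (μ : Measure ℝ) : Prop :=
  ∃ h : ℝ, 0 < h ∧ μ {x : ℝ | ∃ n : ℤ, x = n * h} = 1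

/-- Characteristic function `φ(θ) = E[e^{iθX}]`. -/
noncomputable def charF (μ : Measure ℝ) (θ : ℝ) : ℂ :=
  ∫ x, Complex.exp (Complex.I * θ * x) ∂μ


set_option linter.unusedSectionVars false
set_option linter.unusedVariables false
set_option maxHeartbeats 1000000
open scoped ENNReal

section Basic
variable (μ : Measure ℝ) [IsProbabilityMeasure μ]

lemma Hf_nonneg (t : ℝ) : 0 ≤ Hf μ t := ENNReal.toReal_nonneg

lemma Hf_le_one (t : ℝ) : Hf μ t ≤ 1 := by
  have := measure_mono (subset_univ {y : ℝ | t < |y|}) (μ := μ)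
  simpa [Hf] using ENNReal.toReal_mono (by simp) this

lemma Hf_anti : Antitone (Hf μ) := by
  intro s t hst
  apply ENNReal.toReal_mono (measure_ne_top μ _)
  exact measure_mono (fun y hy => lt_of_le_of_lt hst hy)

lemma Hf_meas : Measurable (Hf μ) := (Hf_anti μ).measurable

lemma Kf_meas : Measurable (Kf μ) := by
  have h1 : Measurable fun t : ℝ => (μ (Set.Ioi t)).toReal :=
    Antitone.measurable (fun s t hst => ENNReal.toReal_mono (measure_ne_top μ _)
      (measure_mono (Ioi_subset_Ioi hst)))
  have h2 : Measurable fun t : ℝ => (μ (Set.Iio (-t))).toReal :=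
    Antitone.measurable (fun s t hst => ENNReal.toReal_mono (measure_ne_top μ _)
      (measure_mono (Iio_subset_Iio (neg_le_neg hst))))
  exact h1.sub h2

lemma abs_Kf_le {t : ℝ} (ht : 0 ≤ t) : |Kf μ t| ≤ Hf μ t := by
  have hIoi : (μ (Set.Ioi t)).toReal ≤ Hf μ t := by
    apply ENNReal.toReal_mono (measure_ne_top μ _)
    apply measure_mono
    intro y hy
    simp only [mem_Ioi] at hy
    simp only [mem_setOf_eq]
    exact lt_of_lt_of_le hy (le_abs_self y)
  have hIio : (μ (Set.Iio (-t))).toReal ≤ Hf μ t := by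
    apply ENNReal.toReal_mono (measure_ne_top μ _)
    apply measure_mono
    intro y hy
    simp only [mem_Iio] at hy
    simp only [mem_setOf_eq]
    exact lt_of_lt_of_le (by linarith) (neg_le_abs y)
  have n1 : 0 ≤ (μ (Set.Ioi t)).toReal := ENNReal.toReal_nonneg
  have n2 : 0 ≤ (μ (Set.Iio (-t))).toReal := ENNReal.toReal_nonneg
  rw [abs_le]
  constructor <;> [skip; skip] <;> simp only [Kf] <;> linarith

lemma abs_Kf_le_one (t : ℝ) : |Kf μ t| ≤ 1 := by
  have n1 : (μ (Set.Ioi t)).toReal ≤ 1 := by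
    simpa using ENNReal.toReal_mono (by simp) (measure_mono (subset_univ _) (μ := μ))
  have n2 : (μ (Set.Iio (-t))).toReal ≤ 1 := by
    simpa using ENNReal.toReal_mono (by simp) (measure_mono (subset_univ _) (μ := μ))
  have m1 : 0 ≤ (μ (Set.Ioi t)).toReal := ENNReal.toReal_nonneg
  have m2 : 0 ≤ (μ (Set.Iio (-t))).toReal := ENNReal.toReal_nonneg
  rw [abs_le]; constructor <;> simp only [Kf] <;> linarith

lemma Kf_intervalIntegrable (a b : ℝ) : IntervalIntegrable (Kf μ) volume a b := by
  apply IntervalIntegrable.mono_fun' (g := fun _ => (1:ℝ)) intervalIntegrable_const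
  · exact ((Kf_meas μ).aestronglyMeasurable).restrict
  · exact Eventually.of_forall fun t => abs_Kf_le_one μ t

lemma Hf_intervalIntegrable (a b : ℝ) : IntervalIntegrable (Hf μ) volume a b := by
  apply IntervalIntegrable.mono_fun' (g := fun _ => (1:ℝ)) intervalIntegrable_const
  · exact ((Hf_meas μ).aestronglyMeasurable).restrict
  · exact Eventually.of_forall fun t => by
      simpa [Real.norm_eq_abs, abs_of_nonneg (Hf_nonneg μ t)] using Hf_le_one μ t

lemma Af_sub (a b : ℝ) : Af μ b - Af μ a = ∫ t in a..b, Kf μ t := by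
  have := intervalIntegral.integral_add_adjacent_intervals
    (Kf_intervalIntegrable μ 0 a) (Kf_intervalIntegrable μ a b)
  simp only [Af]
  linarith

lemma abs_Af_sub_le {a b : ℝ} (h0 : 0 ≤ a) (hab : a ≤ b) :
    |Af μ b - Af μ a| ≤ ∫ t in a..b, Hf μ t := by
  rw [Af_sub]
  calc |∫ t in a..b, Kf μ t| ≤ ∫ t in a..b, |Kf μ t| :=
        intervalIntegral.abs_integral_le_integral_abs hab
  _ ≤ ∫ t in a..b, Hf μ t := by
      apply intervalIntegral.integral_mono_on hab
      · exact (Kf_intervalIntegrable μ a b).abs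
      · exact Hf_intervalIntegrable μ a b
      · exact fun t ht => abs_Kf_le μ (le_trans h0 ht.1)

lemma Af_lipschitz (a b : ℝ) : |Af μ b - Af μ a| ≤ |b - a| := by
  wlog hab : a ≤ b generalizing a b
  · rw [abs_sub_comm, abs_sub_comm b a]; exact this b a (le_of_not_ge hab)
  rw [Af_sub]
  calc |∫ t in a..b, Kf μ t| ≤ 1 * |b - a| := by
        rw [← Real.norm_eq_abs (∫ t in a..b, Kf μ t)]
        apply intervalIntegral.norm_integral_le_of_norm_le_const
        exact fun t _ => abs_Kf_le_one μ t
  _ = |b - a| := one_mul _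

lemma Af_continuous : Continuous (Af μ) := by
  rw [Metric.continuous_iff]
  intro b ε hε
  exact ⟨ε, hε, fun a hab => lt_of_le_of_lt (by simpa [Real.dist_eq] using Af_lipschitz μ b a) hab⟩

end Basic

lemma sqrtH_ii (μ : Measure ℝ) [IsProbabilityMeasure μ] (a b : ℝ) :
    IntervalIntegrable (fun t => Real.sqrt t * Hf μ t) volume a b := by
  apply IntervalIntegrable.mono_fun' (g := Real.sqrt)
    (Real.continuous_sqrt.continuousOn.intervalIntegrable)
  · exact ((Real.continuous_sqrt.measurable.mul (Hf_meas μ)).aestronglyMeasurable).restrict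
  · apply Eventually.of_forall
    intro t
    have h1 : 0 ≤ Real.sqrt t := Real.sqrt_nonneg t
    have h2 := Hf_nonneg μ t
    have h3 := Hf_le_one μ t
    show ‖Real.sqrt t * Hf μ t‖ ≤ Real.sqrt t
    rw [Real.norm_eq_abs, abs_of_nonneg (by positivity)]
    nlinarith


lemma rpow_three_halves {a : ℝ} (ha : 0 ≤ a) : a ^ ((3:ℝ)/2) = a * Real.sqrt a := by
  rcases eq_or_lt_of_le ha with h | h
  · rw [← h, Real.zero_rpow (by norm_num), Real.sqrt_zero, mul_zero]
  · rw [show ((3:ℝ)/2) = 1 + 1/2 by norm_num, Real.rpow_add h, Real.rpow_one,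
      Real.sqrt_eq_rpow]

lemma exp_bound (t : ℝ) : ‖Complex.exp (Complex.I * t) - 1‖ ≤ 2 * Real.sqrt |t| := by
  have habs : ‖Complex.I * t‖ = |t| := by
    simp
  have hs := Real.sqrt_nonneg |t|
  have hsq := Real.sq_sqrt (abs_nonneg t)
  rcases le_or_gt (|t|) 1 with h1 | h1
  · have := Complex.norm_exp_sub_one_le (x := Complex.I * t) (by rw [habs]; exact h1)
    rw [habs] at this
    have h2 : |t| ≤ Real.sqrt |t| := by nlinarith
    linarith
  · have hexp1 : ‖Complex.exp (Complex.I * t)‖ = 1 := by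
      rw [mul_comm]
      exact Complex.norm_exp_ofReal_mul_I t
    have h3 : ‖Complex.exp (Complex.I * t) - 1‖ ≤ 2 := by
      have htri := norm_add_le (Complex.exp (Complex.I * t)) (-1)
      simp only [← sub_eq_add_neg, norm_neg, norm_one] at htri
      rw [hexp1] at htri
      linarith
    have h4 : (1:ℝ) ≤ Real.sqrt |t| := by nlinarith
    linarith

lemma integrand_bound (θ y : ℝ) :
    ‖-Complex.I * y * Complex.exp (Complex.I * θ * y) - (-Complex.I * y)‖
      ≤ 2 * Real.sqrt |θ| * (|y| * Real.sqrt |y|) := by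
  have heq : -Complex.I * y * Complex.exp (Complex.I * θ * y) - (-Complex.I * y)
      = (-Complex.I * y) * (Complex.exp (Complex.I * ((θ * y : ℝ) : ℂ)) - 1) := by
    push_cast
    ring
  rw [heq, norm_mul]
  have h1 : ‖-Complex.I * y‖ = |y| := by
    simp
  rw [h1]
  have h2 := exp_bound (θ * y)
  have h3 : Real.sqrt |θ * y| = Real.sqrt |θ| * Real.sqrt |y| := by
    rw [abs_mul, Real.sqrt_mul (abs_nonneg θ)]
  rw [h3] at h2
  have := abs_nonneg y
  nlinarith [norm_nonneg (Complex.exp (Complex.I * ((θ * y : ℝ) : ℂ)) - 1),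
    Real.sqrt_nonneg |θ|, Real.sqrt_nonneg |y|]


section Meas
variable (μ : Measure ℝ) [IsProbabilityMeasure μ]

lemma integrableOn_of_bdd {ν : Measure ℝ} {s : Set ℝ} {f : ℝ → ℝ} (hν : ν s ≠ ⊤)
    (hs : MeasurableSet s) (hf : Measurable f)
    {M : ℝ} (hM : ∀ y ∈ s, |f y| ≤ M) : IntegrableOn f s ν :=
  Measure.integrableOn_of_bounded hν hf.aestronglyMeasurable
    (by rw [ae_restrict_iff' hs]
        exact Eventually.of_forall fun y hy => by rw [Real.norm_eq_abs]; exact hM y hy)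

lemma int_pos_part {x : ℝ} (hx : 0 < x) :
    ∫ y in Ioo (0:ℝ) x, y ∂μ = ∫ t in Ioo (0:ℝ) x, (μ (Ioo t x)).toReal := by
  have hms : MeasurableSet (Ioo (0:ℝ) x) := measurableSet_Ioo
  have hion : IntegrableOn (fun y => y) (Ioo (0:ℝ) x) μ :=
    integrableOn_of_bdd (measure_ne_top μ _) hms measurable_id (M := x)
      (fun y hy => by rw [abs_of_pos hy.1]; exact le_of_lt hy.2)
  have hf : Integrable ((Ioo (0:ℝ) x).indicator (fun y => y)) μ := (integrable_indicator_iff hms).mpr hion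
  have hnn : 0 ≤ᵐ[μ] (Ioo (0:ℝ) x).indicator (fun y => y) :=
    Eventually.of_forall (fun y => Set.indicator_nonneg (fun z hz => le_of_lt hz.1) y)
  have key := hf.integral_eq_integral_meas_lt hnn
  have hset : ∀ t ∈ Ioi (0:ℝ), {a : ℝ | t < (Ioo (0:ℝ) x).indicator (fun y => y) a} = Ioo t x := by
    intro t ht
    rw [mem_Ioi] at ht
    ext a
    by_cases ha : a ∈ Ioo (0:ℝ) x
    · simp only [mem_setOf_eq, Set.indicator_of_mem ha, mem_Ioo]
      exact ⟨fun h => ⟨h, ha.2⟩, fun h => h.1⟩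
    · simp only [mem_setOf_eq, Set.indicator_of_notMem ha, mem_Ioo]
      constructor
      · intro h; exact absurd h (not_lt.mpr (le_of_lt ht))
      · intro h
        exfalso
        rw [mem_Ioo] at ha
        push_neg at ha
        rcases lt_or_ge 0 a with h0 | h0
        · exact absurd h.2 (not_lt.mpr (ha h0))
        · exact absurd (ht.trans h.1) (not_lt.mpr h0)
  have key2 : ∫ y in Ioo (0:ℝ) x, y ∂μ = ∫ t in Ioi (0:ℝ), (μ (Ioo t x)).toReal := by
    rw [← integral_indicator hms]
    rw [key]
    apply setIntegral_congr_fun measurableSet_Ioi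
    intro t ht
    simp only [hset t ht]
    rfl
  rw [key2]
  symm
  apply (setIntegral_eq_of_subset_of_ae_diff_eq_zero measurableSet_Ioi.nullMeasurableSet
    Ioo_subset_Ioi_self _).symm
  apply Eventually.of_forall
  intro t ht
  rcases ht with ⟨ht1, ht2⟩
  have : x ≤ t := by
    by_contra hlt
    push_neg at hlt
    exact ht2 ⟨ht1, hlt⟩
  rw [Set.Ioo_eq_empty (not_lt.mpr this)]
  simp

lemma int_neg_part {x : ℝ} (hx : 0 < x) :
    ∫ y in Ioo (-x) (0:ℝ), (-y) ∂μ = ∫ t in Ioo (0:ℝ) x, (μ (Ioo (-x) (-t))).toReal := by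
  have hms : MeasurableSet (Ioo (-x) (0:ℝ)) := measurableSet_Ioo
  have hion : IntegrableOn (fun y => -y) (Ioo (-x) (0:ℝ)) μ :=
    integrableOn_of_bdd (measure_ne_top μ _) hms measurable_id.neg (M := x)
      (fun y hy => by rw [abs_neg, abs_of_neg hy.2]; linarith [hy.1])
  have hf : Integrable ((Ioo (-x) (0:ℝ)).indicator (fun y => -y)) μ :=
    (integrable_indicator_iff hms).mpr hion
  have hnn : 0 ≤ᵐ[μ] (Ioo (-x) (0:ℝ)).indicator (fun y => -y) :=
    Eventually.of_forall (fun y => Set.indicator_nonneg (fun z hz => by linarith [hz.2]) y)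
  have key := hf.integral_eq_integral_meas_lt hnn
  have hset : ∀ t ∈ Ioi (0:ℝ),
      {a : ℝ | t < (Ioo (-x) (0:ℝ)).indicator (fun y => -y) a} = Ioo (-x) (-t) := by
    intro t ht
    rw [mem_Ioi] at ht
    ext a
    by_cases ha : a ∈ Ioo (-x) (0:ℝ)
    · simp only [mem_setOf_eq, Set.indicator_of_mem ha, mem_Ioo]
      constructor
      · intro h; exact ⟨ha.1, by linarith⟩
      · intro h; linarith [h.2]
    · simp only [mem_setOf_eq, Set.indicator_of_notMem ha, mem_Ioo]
      constructor
      · intro h; exact absurd h (not_lt.mpr (le_of_lt ht))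
      · intro h
        exfalso
        rw [mem_Ioo] at ha
        push_neg at ha
        rcases lt_or_ge a 0 with h0 | h0
        · linarith [ha (h.1), h.2]
        · linarith [h.2]
  have key2 : ∫ y in Ioo (-x) (0:ℝ), (-y) ∂μ
      = ∫ t in Ioi (0:ℝ), (μ (Ioo (-x) (-t))).toReal := by
    rw [← integral_indicator hms, key]
    apply setIntegral_congr_fun measurableSet_Ioi
    intro t ht
    simp only [hset t ht]
    rfl
  rw [key2]
  symm
  apply (setIntegral_eq_of_subset_of_ae_diff_eq_zero measurableSet_Ioi.nullMeasurableSet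
    Ioo_subset_Ioi_self _).symm
  apply Eventually.of_forall
  intro t ht
  rcases ht with ⟨ht1, ht2⟩
  have : x ≤ t := by
    by_contra hlt
    push_neg at hlt
    exact ht2 ⟨ht1, hlt⟩
  rw [Set.Ioo_eq_empty (by intro h; linarith)]
  simp

lemma m_split {x : ℝ} (hx : 0 < x) :
    ∫ y in Ioo (-x) x, y ∂μ
      = (∫ y in Ioo (0:ℝ) x, y ∂μ) - ∫ y in Ioo (-x) (0:ℝ), (-y) ∂μ := by
  have hu : Ioo (-x) x = Ioo (-x) (0:ℝ) ∪ Ico (0:ℝ) x := by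
    ext a
    simp only [mem_Ioo, mem_union, mem_Ico]
    constructor
    · intro h
      rcases lt_or_ge a 0 with h0 | h0
      · exact Or.inl ⟨h.1, h0⟩
      · exact Or.inr ⟨h0, h.2⟩
    · intro h
      rcases h with h | h
      · exact ⟨h.1, h.2.trans hx⟩
      · exact ⟨lt_of_lt_of_le (by linarith) h.1, h.2⟩
  have hdisj : Disjoint (Ioo (-x) (0:ℝ)) (Ico (0:ℝ) x) := by
    rw [Set.disjoint_left]
    intro a ha ha'
    exact absurd ha.2 (not_lt.mpr ha'.1)
  have hi1 : IntegrableOn (fun y : ℝ => y) (Ioo (-x) (0:ℝ)) μ :=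
    integrableOn_of_bdd (measure_ne_top μ _) measurableSet_Ioo measurable_id (M := x)
      (fun y hy => by rw [abs_of_neg hy.2]; linarith [hy.1])
  have hi2 : IntegrableOn (fun y : ℝ => y) (Ico (0:ℝ) x) μ :=
    integrableOn_of_bdd (measure_ne_top μ _) measurableSet_Ico measurable_id (M := x)
      (fun y hy => by rw [abs_of_nonneg hy.1]; exact le_of_lt hy.2)
  rw [hu, setIntegral_union hdisj measurableSet_Ico hi1 hi2]
  have h2 : ∫ y in Ico (0:ℝ) x, y ∂μ = ∫ y in Ioo (0:ℝ) x, y ∂μ := by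
    apply setIntegral_eq_of_subset_of_ae_diff_eq_zero measurableSet_Ico.nullMeasurableSet
      Ioo_subset_Ico_self
    apply Eventually.of_forall
    intro t ht
    obtain ⟨⟨h1, hlt⟩, hnot⟩ := ht
    have : t = 0 := by
      by_contra hne
      exact hnot ⟨lt_of_le_of_ne h1 (Ne.symm hne), hlt⟩
    exact this
  have h3 : ∫ y in Ioo (-x) (0:ℝ), y ∂μ = -∫ y in Ioo (-x) (0:ℝ), (-y) ∂μ := by
    rw [integral_neg]; ring
  rw [h2, h3]
  ring
lemma m_close {x : ℝ} (hx : 0 < x) :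
    |(∫ y in Ioo (-x) x, y ∂μ) - Af μ x| ≤ 2 * x * Hf μ (x/2) := by
  set Gp : ℝ → ℝ := fun t => (μ (Ioo t x)).toReal with hGp
  set Gm : ℝ → ℝ := fun t => (μ (Ioo (-x) (-t))).toReal with hGm
  set c : ℝ := (μ (Ici x)).toReal - (μ (Iic (-x))).toReal with hc
  have hGp_meas : Measurable Gp :=
    Antitone.measurable (fun s t hst => ENNReal.toReal_mono (measure_ne_top μ _)
      (measure_mono (fun a ha => ⟨lt_of_le_of_lt hst ha.1, ha.2⟩)))
  have hGm_meas : Measurable Gm :=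
    Antitone.measurable (fun s t hst => ENNReal.toReal_mono (measure_ne_top μ _)
      (measure_mono (fun a ha => ⟨ha.1, lt_of_lt_of_le ha.2 (neg_le_neg hst)⟩)))
  have hvol : volume (Ioo (0:ℝ) x) ≠ ⊤ := by
    rw [Real.volume_Ioo]; exact ENNReal.ofReal_ne_top
  have hKint : IntegrableOn (Kf μ) (Ioo (0:ℝ) x) volume :=
    integrableOn_of_bdd hvol measurableSet_Ioo (Kf_meas μ) (fun t _ => abs_Kf_le_one μ t)
  have hGp_int : IntegrableOn Gp (Ioo (0:ℝ) x) volume := by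
    apply integrableOn_of_bdd hvol measurableSet_Ioo hGp_meas (M := 1)
    intro t _
    rw [abs_of_nonneg ENNReal.toReal_nonneg]
    simpa using ENNReal.toReal_mono (by simp) (measure_mono (subset_univ _) (μ := μ))
  have hGm_int : IntegrableOn Gm (Ioo (0:ℝ) x) volume := by
    apply integrableOn_of_bdd hvol measurableSet_Ioo hGm_meas (M := 1)
    intro t _
    rw [abs_of_nonneg ENNReal.toReal_nonneg]
    simpa using ENNReal.toReal_mono (by simp) (measure_mono (subset_univ _) (μ := μ))
  have hAf : Af μ x = ∫ t in Ioo (0:ℝ) x, Kf μ t := by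
    rw [Af, intervalIntegral.integral_of_le (le_of_lt hx), integral_Ioc_eq_integral_Ioo]
  have hm : ∫ y in Ioo (-x) x, y ∂μ = (∫ t in Ioo (0:ℝ) x, Gp t) - ∫ t in Ioo (0:ℝ) x, Gm t := by
    rw [m_split μ hx, int_pos_part μ hx, int_neg_part μ hx]
  have hpt : ∀ t ∈ Ioo (0:ℝ) x, Kf μ t - Gp t + Gm t = c := by
    intro t ht
    have h1 : μ (Ioi t) = μ (Ioo t x) + μ (Ici x) := by
      rw [← measure_union _ measurableSet_Ici]
      · rw [Ioo_union_Ici_eq_Ioi ht.2]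
      · exact fun s hs1 hs2 a ha => absurd ((hs2 ha)) (not_le.mpr (hs1 ha).2)
    have h2 : μ (Iio (-t)) = μ (Ioo (-x) (-t)) + μ (Iic (-x)) := by
      rw [← measure_union _ measurableSet_Iic]
      · rw [union_comm, Iic_union_Ioo_eq_Iio (by linarith [ht.2])]
      · exact fun s hs1 hs2 a ha => absurd ((hs2 ha)) (not_le.mpr (hs1 ha).1)
    have e1 : (μ (Ioi t)).toReal = Gp t + (μ (Ici x)).toReal := by
      rw [h1, ENNReal.toReal_add (measure_ne_top μ _) (measure_ne_top μ _)]
    have e2 : (μ (Iio (-t))).toReal = Gm t + (μ (Iic (-x))).toReal := by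
      rw [h2, ENNReal.toReal_add (measure_ne_top μ _) (measure_ne_top μ _)]
    simp only [Kf, hc, e1, e2]
    ring
  have hint_eq : ∫ t in Ioo (0:ℝ) x, (Kf μ t - Gp t + Gm t) = c * x := by
    rw [setIntegral_congr_fun measurableSet_Ioo hpt]
    rw [setIntegral_const]
    rw [Real.volume_real_Ioo_of_le (by linarith)]
    rw [smul_eq_mul]
    ring
  have hcomb : (Af μ x) - ((∫ t in Ioo (0:ℝ) x, Gp t) - ∫ t in Ioo (0:ℝ) x, Gm t) = c * x := by
    have h12 : IntegrableOn (fun t => Kf μ t - Gp t) (Ioo (0:ℝ) x) volume := hKint.sub hGp_int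
    have e : (∫ t in Ioo (0:ℝ) x, (Kf μ t - Gp t + Gm t))
        = ((∫ t in Ioo (0:ℝ) x, Kf μ t) - ∫ t in Ioo (0:ℝ) x, Gp t) + ∫ t in Ioo (0:ℝ) x, Gm t := by
      rw [integral_add h12 hGm_int, integral_sub hKint hGp_int]
    rw [hAf]
    rw [e] at hint_eq
    linarith
  have hcbound : |c| ≤ 2 * Hf μ (x/2) := by
    have b1 : (μ (Ici x)).toReal ≤ Hf μ (x/2) := by
      apply ENNReal.toReal_mono (measure_ne_top μ _)
      apply measure_mono
      intro y hy
      rw [mem_Ici] at hy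
      rw [mem_setOf_eq]
      rw [abs_of_pos (by linarith)]
      linarith
    have b2 : (μ (Iic (-x))).toReal ≤ Hf μ (x/2) := by
      apply ENNReal.toReal_mono (measure_ne_top μ _)
      apply measure_mono
      intro y hy
      rw [mem_Iic] at hy
      rw [mem_setOf_eq]
      rw [abs_of_neg (by linarith)]
      linarith
    have n1 : 0 ≤ (μ (Ici x)).toReal := ENNReal.toReal_nonneg
    have n2 : 0 ≤ (μ (Iic (-x))).toReal := ENNReal.toReal_nonneg
    rw [hc, abs_le]
    constructor <;> linarith
  have final : |(∫ y in Ioo (-x) x, y ∂μ) - Af μ x| = |c| * x := by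
    rw [hm]
    have : (∫ t in Ioo (0:ℝ) x, Gp t) - (∫ t in Ioo (0:ℝ) x, Gm t) - Af μ x = -(c*x) := by
      linarith [hcomb]
    rw [this, abs_neg, abs_mul, abs_of_pos hx]
  rw [final]
  have := Hf_nonneg μ (x/2)
  nlinarith
end Meas

section Gronwall
variable {μ : Measure ℝ} [IsProbabilityMeasure μ] {δ T₀ : ℝ}
  (hδ0 : 0 < δ) (hδ1 : δ ≤ 1/100) (hT1 : 1 ≤ T₀)
  (hH : ∀ t, T₀ ≤ t → t * Hf μ t ≤ δ * Af μ t)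
  (hA : ∀ t, T₀ ≤ t → 0 < Af μ t)

include hδ0 hδ1 hT1 hH hA

lemma gron_block {s u : ℝ} (hs : T₀ ≤ s) (hsu : s ≤ u) (hu2 : u ≤ 2 * s) :
    (1 - δ * Real.log 2) * Af μ s ≤ Af μ u := by
  have hs0 : (0:ℝ) < s := lt_of_lt_of_le (by linarith) hs
  obtain ⟨r, hrIcc, hrmax⟩ :=
    (isCompact_Icc (a := s) (b := u)).exists_isMaxOn ⟨s, by constructor <;> linarith⟩
      (Af_continuous μ).continuousOn
  obtain ⟨hsr, hru⟩ := hrIcc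
  have hr0 : (0:ℝ) < r := lt_of_lt_of_le hs0 hsr
  have hrT : T₀ ≤ r := le_trans hs hsr
  have hAr : 0 < Af μ r := hA r hrT
  -- pointwise bound on [r,u]
  have hpt : ∀ t ∈ Icc r u, Hf μ t ≤ δ * Af μ r * (1/t) := by
    intro t ht
    have ht0 : 0 < t := lt_of_lt_of_le hr0 ht.1
    have h1 : t * Hf μ t ≤ δ * Af μ t := hH t (le_trans hrT ht.1)
    have h2 : Af μ t ≤ Af μ r := hrmax ⟨le_trans hsr ht.1, ht.2⟩
    calc Hf μ t ≤ δ * Af μ t / t := by rw [le_div_iff₀ ht0]; nlinarith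
    _ ≤ δ * Af μ r / t := by gcongr
    _ = δ * Af μ r * (1/t) := by ring
  have hint : ∫ t in r..u, Hf μ t ≤ ∫ t in r..u, δ * Af μ r * (1/t) := by
    apply intervalIntegral.integral_mono_on hru (Hf_intervalIntegrable μ r u)
    · apply ContinuousOn.intervalIntegrable
      apply ContinuousOn.mul continuousOn_const
      apply ContinuousOn.div continuousOn_const continuousOn_id
      intro t ht
      rw [uIcc_of_le hru] at ht
      exact ne_of_gt (lt_of_lt_of_le hr0 ht.1)
    · exact hpt
  have hlog : ∫ t in r..u, δ * Af μ r * (1/t) = δ * Af μ r * Real.log (u/r) := by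
    rw [intervalIntegral.integral_const_mul, integral_one_div]
    intro h
    rw [uIcc_of_le hru] at h
    exact absurd h.1 (not_le.mpr hr0)
  have hur2 : u / r ≤ 2 := by
    rw [div_le_iff₀ hr0]; nlinarith
  have hlog2 : Real.log (u/r) ≤ Real.log 2 :=
    Real.log_le_log (div_pos (lt_of_lt_of_le hr0 hru) hr0) hur2
  have key : |Af μ u - Af μ r| ≤ δ * Af μ r * Real.log 2 := by
    calc |Af μ u - Af μ r| ≤ ∫ t in r..u, Hf μ t :=
          abs_Af_sub_le μ (le_of_lt hr0) hru
    _ ≤ δ * Af μ r * Real.log (u/r) := le_of_le_of_eq hint hlog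
    _ ≤ δ * Af μ r * Real.log 2 := by
        apply mul_le_mul_of_nonneg_left hlog2
        positivity
  have hAs : Af μ s ≤ Af μ r := hrmax ⟨le_refl s, hsu⟩
  have h1 : Af μ r - Af μ u ≤ δ * Af μ r * Real.log 2 := by
    have := abs_le.mp key
    linarith [this.1]
  have hq0 : 0 ≤ 1 - δ * Real.log 2 := by
    nlinarith [Real.log_two_lt_d9, Real.log_two_gt_d9]
  nlinarith

lemma gron_iter : ∀ n : ℕ, ∀ t x : ℝ, T₀ ≤ t → t ≤ x → x ≤ t * 2^n →
    (1 - δ * Real.log 2)^n * Af μ t ≤ Af μ x := by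
  intro n
  induction n with
  | zero =>
    intro t x ht htx hx
    simp only [pow_zero, one_mul]
    have : x = t := le_antisymm (by simpa using hx) htx
    rw [this]
  | succ n ih =>
    intro t x ht htx hx
    have hq0 : 0 ≤ 1 - δ * Real.log 2 := by
      nlinarith [Real.log_two_lt_d9, Real.log_two_gt_d9]
    have hq1 : 1 - δ * Real.log 2 ≤ 1 := by
      nlinarith [Real.log_two_gt_d9]
    have ht0 : (0:ℝ) < t := lt_of_lt_of_le (by linarith) ht
    by_cases hcase : x ≤ t * 2^n
    · have := ih t x ht htx hcase
      have hpow : (1 - δ * Real.log 2)^(n+1) ≤ (1 - δ * Real.log 2)^n :=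
        pow_le_pow_of_le_one hq0 hq1 (by omega)
      have hAt : 0 < Af μ t := hA t ht
      nlinarith [pow_nonneg hq0 n, pow_nonneg hq0 (n+1)]
    · push_neg at hcase
      set u := x / 2^n with hu
      have h2n : (0:ℝ) < 2^n := by positivity
      have htu : t < u := by rw [lt_div_iff₀ h2n]; linarith
      have hu2t : u ≤ 2 * t := by
        rw [div_le_iff₀ h2n]
        calc x ≤ t * 2^(n+1) := hx
        _ = 2 * t * 2^n := by ring
      have huT : T₀ ≤ u := le_trans ht (le_of_lt htu)
      have hux : u ≤ x := by
        rw [div_le_iff₀ h2n]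
        have h1n : (1:ℝ) ≤ 2^n := one_le_pow₀ one_le_two
        nlinarith [ht0.trans htu]
      have hblock := gron_block hδ0 hδ1 hT1 hH hA ht (le_of_lt htu) hu2t
      have hih := ih u x huT hux (by rw [hu]; field_simp; exact le_refl x)
      calc (1 - δ * Real.log 2)^(n+1) * Af μ t
          = (1 - δ * Real.log 2)^n * ((1 - δ * Real.log 2) * Af μ t) := by ring
      _ ≤ (1 - δ * Real.log 2)^n * Af μ u :=
          mul_le_mul_of_nonneg_left hblock (pow_nonneg hq0 n)
      _ ≤ Af μ x := hih

lemma Af_pow_bound {t x : ℝ} (ht : T₀ ≤ t) (htx : t ≤ x) :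
    Af μ t ≤ 2 * Af μ x * (x / t) ^ (8⁻¹ : ℝ) := by
  have ht0 : (0:ℝ) < t := lt_of_lt_of_le (by linarith) ht
  have hx0 : (0:ℝ) < x := ht0.trans_le htx
  have hxt1 : (1:ℝ) ≤ x / t := (one_le_div ht0).mpr htx
  have hxt0 : (0:ℝ) < x / t := by positivity
  set q : ℝ := 1 - δ * Real.log 2 with hqdef
  have hlog2 := Real.log_two_gt_d9
  have hlog2' := Real.log_two_lt_d9
  have hq0 : (0:ℝ) < q := by rw [hqdef]; nlinarith
  have hq1 : q ≤ 1 := by rw [hqdef]; nlinarith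
  set n : ℕ := ⌈Real.logb 2 (x / t)⌉₊ with hndef
  have hlogb_nonneg : 0 ≤ Real.logb 2 (x / t) := Real.logb_nonneg one_lt_two hxt1
  have hlogb_le : Real.logb 2 (x / t) ≤ (n : ℝ) := Nat.le_ceil _
  have hn_le : (n : ℝ) ≤ Real.logb 2 (x / t) + 1 :=
    le_of_lt (Nat.ceil_lt_add_one hlogb_nonneg)
  -- x ≤ t * 2^n
  have hx2n : x ≤ t * 2 ^ n := by
    have h1 : x / t = (2:ℝ) ^ Real.logb 2 (x / t) := (Real.rpow_logb two_pos (by norm_num) hxt0).symm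
    have h2 : (2:ℝ) ^ Real.logb 2 (x / t) ≤ (2:ℝ) ^ (n:ℝ) :=
      Real.rpow_le_rpow_of_exponent_le one_le_two hlogb_le
    have h3 : ((2:ℝ) ^ (n:ℝ)) = (2:ℝ) ^ n := by rw [Real.rpow_natCast]
    have : x / t ≤ 2 ^ n := by rw [h1]; rw [← h3]; exact h2
    calc x = t * (x / t) := by field_simp
    _ ≤ t * 2 ^ n := by gcongr
  have hiter := gron_iter hδ0 hδ1 hT1 hH hA n t x ht htx hx2n
  -- (1/q)^n ≤ 2 * (x/t)^(1/8)
  have hq8 : 1 / q ≤ (2:ℝ) ^ (8⁻¹ : ℝ) := by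
    have hexp : (2:ℝ) ^ (8⁻¹ : ℝ) = Real.exp (Real.log 2 * 8⁻¹) := by
      rw [← Real.exp_log (x := (2:ℝ)) two_pos, ← Real.exp_mul, Real.log_exp]
    have h1 : 1 + Real.log 2 * 8⁻¹ ≤ Real.exp (Real.log 2 * 8⁻¹) := by
      linarith [Real.add_one_le_exp (Real.log 2 * 8⁻¹)]
    rw [hexp, div_le_iff₀ hq0]
    nlinarith
  have hpow : (1 / q) ^ n ≤ 2 * (x / t) ^ (8⁻¹ : ℝ) := by
    calc (1 / q) ^ n ≤ ((2:ℝ) ^ (8⁻¹ : ℝ)) ^ n := by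
          apply pow_le_pow_left₀ (by positivity) hq8
    _ = (2:ℝ) ^ ((8⁻¹ : ℝ) * n) := by
          rw [← Real.rpow_natCast ((2:ℝ) ^ (8⁻¹ : ℝ)) n, ← Real.rpow_mul (by norm_num)]
    _ ≤ (2:ℝ) ^ ((8⁻¹ : ℝ) * (Real.logb 2 (x / t) + 1)) := by
          apply Real.rpow_le_rpow_of_exponent_le one_le_two
          nlinarith
    _ = (2:ℝ) ^ ((8⁻¹ : ℝ) * Real.logb 2 (x / t)) * (2:ℝ) ^ (8⁻¹ : ℝ) := by
          rw [← Real.rpow_add two_pos]; ring_nf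
    _ = ((2:ℝ) ^ Real.logb 2 (x / t)) ^ (8⁻¹ : ℝ) * (2:ℝ) ^ (8⁻¹ : ℝ) := by
          rw [← Real.rpow_mul (by norm_num)]; ring_nf
    _ = (x / t) ^ (8⁻¹ : ℝ) * (2:ℝ) ^ (8⁻¹ : ℝ) := by
          rw [Real.rpow_logb two_pos (by norm_num) hxt0]
    _ ≤ 2 * (x / t) ^ (8⁻¹ : ℝ) := by
          have h2le : (2:ℝ) ^ (8⁻¹ : ℝ) ≤ 2 := by
            calc (2:ℝ) ^ (8⁻¹ : ℝ) ≤ (2:ℝ) ^ (1 : ℝ) :=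
                  Real.rpow_le_rpow_of_exponent_le one_le_two (by norm_num)
            _ = 2 := Real.rpow_one 2
          have hp : 0 ≤ (x / t) ^ (8⁻¹ : ℝ) := Real.rpow_nonneg (le_of_lt hxt0) _
          nlinarith
  have hqn0 : (0:ℝ) < q ^ n := pow_pos hq0 n
  have := hiter
  calc Af μ t = (q ^ n * Af μ t) * (1/q)^n := by
        rw [one_div, inv_pow, mul_comm (q^n), mul_assoc, mul_inv_cancel₀ (ne_of_gt hqn0), mul_one]
  _ ≤ Af μ x * (1/q)^n := by
        apply mul_le_mul_of_nonneg_right hiter (by positivity)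
  _ ≤ Af μ x * (2 * (x / t) ^ (8⁻¹ : ℝ)) := by
        apply mul_le_mul_of_nonneg_left hpow (le_of_lt (hA x (le_trans ht htx)))
  _ = 2 * Af μ x * (x / t) ^ (8⁻¹ : ℝ) := by ring

lemma sqrtH_int {x : ℝ} (hx : T₀ ≤ x) :
    ∫ t in (0:ℝ)..x, Real.sqrt t * Hf μ t ≤ T₀ * T₀ + 6 * δ * Real.sqrt x * Af μ x := by
  have hT0 : (0:ℝ) < T₀ := by linarith
  have hx0 : (0:ℝ) < x := lt_of_lt_of_le hT0 hx
  have hAx : 0 < Af μ x := hA x hx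
  have hsplit : ∫ t in (0:ℝ)..x, Real.sqrt t * Hf μ t
      = (∫ t in (0:ℝ)..T₀, Real.sqrt t * Hf μ t) + ∫ t in T₀..x, Real.sqrt t * Hf μ t :=
    (intervalIntegral.integral_add_adjacent_intervals (sqrtH_ii μ 0 T₀) (sqrtH_ii μ T₀ x)).symm
  have part1 : ∫ t in (0:ℝ)..T₀, Real.sqrt t * Hf μ t ≤ T₀ * T₀ := by
    calc ∫ t in (0:ℝ)..T₀, Real.sqrt t * Hf μ t ≤ ∫ _t in (0:ℝ)..T₀, Real.sqrt T₀ := by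
          apply intervalIntegral.integral_mono_on (le_of_lt hT0) (sqrtH_ii μ 0 T₀)
            intervalIntegrable_const
          intro t ht
          have h1 : Real.sqrt t ≤ Real.sqrt T₀ := Real.sqrt_le_sqrt ht.2
          have h2 := Hf_nonneg μ t
          have h3 := Hf_le_one μ t
          have h4 : (0:ℝ) ≤ Real.sqrt t := Real.sqrt_nonneg t
          nlinarith
    _ = Real.sqrt T₀ * T₀ := by simp [mul_comm]
    _ ≤ T₀ * T₀ := by
          nlinarith [Real.sq_sqrt (le_of_lt hT0), Real.sqrt_nonneg T₀,
            sq_nonneg (Real.sqrt T₀ - 1)]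
  set g : ℝ → ℝ := fun t => 2 * δ * Af μ x * x ^ (8⁻¹ : ℝ) * t ^ (-(5:ℝ)/8) with hgdef
  have hgint : IntervalIntegrable g volume T₀ x := by
    apply ContinuousOn.intervalIntegrable
    apply ContinuousOn.mul continuousOn_const
    apply ContinuousOn.rpow_const continuousOn_id
    intro t ht
    rw [uIcc_of_le hx] at ht
    exact Or.inl (ne_of_gt (lt_of_lt_of_le hT0 ht.1))
  have part2 : ∫ t in T₀..x, Real.sqrt t * Hf μ t ≤ 6 * δ * Real.sqrt x * Af μ x := by
    have hpt : ∀ t ∈ Icc T₀ x, Real.sqrt t * Hf μ t ≤ g t := by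
      intro t ht
      have ht0 : (0:ℝ) < t := lt_of_lt_of_le hT0 ht.1
      have hH' : Hf μ t ≤ δ * Af μ t / t := by
        rw [le_div_iff₀ ht0]; nlinarith [hH t ht.1]
      have hApow := Af_pow_bound hδ0 hδ1 hT1 hH hA ht.1 ht.2
      have hsq : (0:ℝ) ≤ Real.sqrt t := Real.sqrt_nonneg t
      have step1 : Real.sqrt t * Hf μ t ≤ Real.sqrt t * (δ * (2 * Af μ x * (x/t) ^ (8⁻¹:ℝ)) / t) := by
        have h2 : Hf μ t ≤ δ * (2 * Af μ x * (x/t) ^ (8⁻¹:ℝ)) / t := by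
          apply hH'.trans
          rw [div_le_div_iff_of_pos_right ht0]
          exact mul_le_mul_of_nonneg_left hApow (le_of_lt hδ0)
        exact mul_le_mul_of_nonneg_left h2 hsq
      have heq : Real.sqrt t * (δ * (2 * Af μ x * (x/t) ^ (8⁻¹:ℝ)) / t) = g t := by
        rw [hgdef]
        simp only
        rw [Real.sqrt_eq_rpow, Real.div_rpow (le_of_lt hx0) (le_of_lt ht0)]
        rw [show (-(5:ℝ)/8) = 1/2 - 8⁻¹ - 1 by norm_num, Real.rpow_sub ht0, Real.rpow_sub ht0,
          Real.rpow_one]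
        field_simp
      exact step1.trans_eq heq
    calc ∫ t in T₀..x, Real.sqrt t * Hf μ t ≤ ∫ t in T₀..x, g t :=
          intervalIntegral.integral_mono_on hx (sqrtH_ii μ T₀ x) hgint hpt
    _ = 2 * δ * Af μ x * x ^ (8⁻¹ : ℝ) * ∫ t in T₀..x, t ^ (-(5:ℝ)/8) := by
          rw [hgdef]; exact intervalIntegral.integral_const_mul _ _
    _ = 2 * δ * Af μ x * x ^ (8⁻¹ : ℝ) *
          ((x ^ (-(5:ℝ)/8 + 1) - T₀ ^ (-(5:ℝ)/8 + 1)) / (-(5:ℝ)/8 + 1)) := by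
          rw [integral_rpow (Or.inl (by norm_num))]
    _ ≤ 2 * δ * Af μ x * x ^ (8⁻¹ : ℝ) * (x ^ ((3:ℝ)/8) / ((3:ℝ)/8)) := by
          apply mul_le_mul_of_nonneg_left _ (by positivity)
          rw [show (-(5:ℝ)/8 + 1) = (3:ℝ)/8 by norm_num]
          have := Real.rpow_nonneg (le_of_lt hT0) ((3:ℝ)/8)
          rw [div_le_div_iff_of_pos_right (by norm_num : (0:ℝ) < (3:ℝ)/8)]
          linarith
    _ ≤ 6 * δ * Real.sqrt x * Af μ x := by
          have hxx : x ^ (8⁻¹ : ℝ) * x ^ ((3:ℝ)/8) = Real.sqrt x := by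
            rw [← Real.rpow_add hx0, Real.sqrt_eq_rpow]; norm_num
          have hs0 : 0 ≤ Real.sqrt x := Real.sqrt_nonneg x
          have heq : 2 * δ * Af μ x * x ^ (8⁻¹ : ℝ) * (x ^ ((3:ℝ)/8) / ((3:ℝ)/8))
              = (16/3) * δ * (x ^ (8⁻¹ : ℝ) * x ^ ((3:ℝ)/8)) * Af μ x := by ring
          rw [heq, hxx]
          nlinarith [mul_nonneg (mul_nonneg (le_of_lt hδ0) hs0) (le_of_lt hAx)]
  linarith [hsplit, part1, part2]

lemma Af_lower {x : ℝ} (hx : T₀ ≤ x) :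
    Af μ T₀ / (2 * (x / T₀) ^ (8⁻¹ : ℝ)) ≤ Af μ x := by
  have hT0 : (0:ℝ) < T₀ := by linarith
  have hx0 : (0:ℝ) < x := lt_of_lt_of_le hT0 hx
  have h := Af_pow_bound hδ0 hδ1 hT1 hH hA (le_refl T₀) hx
  have hp : (0:ℝ) < (x / T₀) ^ (8⁻¹ : ℝ) := Real.rpow_pos_of_pos (by positivity) _
  rw [div_le_iff₀ (by positivity)]
  nlinarith

lemma sqrtAf_lower {x : ℝ} (hx : T₀ ≤ x) :
    Af μ T₀ * T₀ ^ (8⁻¹ : ℝ) / 2 * x ^ ((3:ℝ)/8) ≤ Real.sqrt x * Af μ x := by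
  have hT0 : (0:ℝ) < T₀ := by linarith
  have hx0 : (0:ℝ) < x := lt_of_lt_of_le hT0 hx
  have h := Af_lower hδ0 hδ1 hT1 hH hA hx
  have hs0 : (0:ℝ) < Real.sqrt x := Real.sqrt_pos.mpr hx0
  have hkey : Real.sqrt x * (Af μ T₀ / (2 * (x / T₀) ^ (8⁻¹ : ℝ)))
      = Af μ T₀ * T₀ ^ (8⁻¹ : ℝ) / 2 * x ^ ((3:ℝ)/8) := by
    rw [Real.div_rpow (le_of_lt hx0) (le_of_lt hT0)]
    have e1 : Real.sqrt x = x ^ ((3:ℝ)/8) * x ^ (8⁻¹ : ℝ) := by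
      rw [Real.sqrt_eq_rpow, ← Real.rpow_add hx0]; norm_num
    rw [e1]
    have h1 : (0:ℝ) < x ^ (8⁻¹ : ℝ) := Real.rpow_pos_of_pos hx0 _
    have h2 : (0:ℝ) < T₀ ^ (8⁻¹ : ℝ) := Real.rpow_pos_of_pos hT0 _
    field_simp
  calc Af μ T₀ * T₀ ^ (8⁻¹ : ℝ) / 2 * x ^ ((3:ℝ)/8)
      = Real.sqrt x * (Af μ T₀ / (2 * (x / T₀) ^ (8⁻¹ : ℝ))) := hkey.symm
  _ ≤ Real.sqrt x * Af μ x := mul_le_mul_of_nonneg_left h (le_of_lt hs0)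

end Gronwall


section J
variable (μ : Measure ℝ) [IsProbabilityMeasure μ]

lemma J_bound {x : ℝ} (hx : 0 < x) :
    ∫ y in Ioo (-x) x, |y| * Real.sqrt |y| ∂μ
      ≤ (3:ℝ)/2 * ∫ t in (0:ℝ)..x, Real.sqrt t * Hf μ t := by
  set F : ℝ → ℝ := fun y => |y| * Real.sqrt |y| with hF
  set f : ℝ → ℝ := (Ioo (-x) x).indicator (fun y => |y|) with hf
  have f_nn : 0 ≤ᵐ[μ] f :=
    Eventually.of_forall (fun y => Set.indicator_nonneg (fun z _ => abs_nonneg z) y)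
  have f_mble : AEMeasurable f μ :=
    ((measurable_abs).indicator measurableSet_Ioo).aemeasurable
  have g_intble : ∀ t > (0:ℝ), IntervalIntegrable (fun s => (3:ℝ)/2 * Real.sqrt s) volume 0 t :=
    fun t _ => (continuous_const.mul Real.continuous_sqrt).continuousOn.intervalIntegrable
  have g_nn : ∀ᵐ t ∂(volume.restrict (Ioi (0:ℝ))), 0 ≤ (3:ℝ)/2 * Real.sqrt t :=
    Eventually.of_forall (fun t => by positivity)
  have key := lintegral_comp_eq_lintegral_meas_lt_mul μ f_nn f_mble g_intble g_nn
  -- LHS rewriting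
  have hG : ∀ a : ℝ, 0 ≤ a → ∫ t in (0:ℝ)..a, (3:ℝ)/2 * Real.sqrt t = a * Real.sqrt a := by
    intro a ha
    rw [intervalIntegral.integral_const_mul]
    have hcongr : ∫ t in (0:ℝ)..a, Real.sqrt t = ∫ t in (0:ℝ)..a, t ^ ((1:ℝ)/2) :=
      intervalIntegral.integral_congr (fun t _ => Real.sqrt_eq_rpow t)
    rw [hcongr, integral_rpow (Or.inl (by norm_num)), Real.zero_rpow (by norm_num),
      show (1:ℝ)/2 + 1 = (3:ℝ)/2 by norm_num, rpow_three_halves ha]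
    field_simp
    ring
  have hLHS : ∀ ω : ℝ, ENNReal.ofReal (∫ t in (0:ℝ)..f ω, (3:ℝ)/2 * Real.sqrt t)
      = (Ioo (-x) x).indicator (fun y => ENNReal.ofReal (F y)) ω := by
    intro ω
    rw [hG (f ω) (Set.indicator_nonneg (fun z _ => abs_nonneg z) ω)]
    by_cases h : ω ∈ Ioo (-x) x
    · rw [hf]
      simp only [Set.indicator_of_mem h]
      rfl
    · rw [hf]
      simp only [Set.indicator_of_notMem h]
      simp
  rw [lintegral_congr hLHS] at key
  -- identify LHS with real integral
  have hFint : IntegrableOn F (Ioo (-x) x) μ := by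
    apply integrableOn_of_bdd (measure_ne_top μ _) measurableSet_Ioo
      (measurable_abs.mul (Real.continuous_sqrt.measurable.comp measurable_abs)) (M := x * Real.sqrt x)
    intro y hy
    have hyx : |y| ≤ x := by
      rw [abs_le]; exact ⟨le_of_lt hy.1, le_of_lt hy.2⟩
    have h1 : Real.sqrt |y| ≤ Real.sqrt x := Real.sqrt_le_sqrt hyx
    have h2 : 0 ≤ Real.sqrt |y| := Real.sqrt_nonneg _
    show |(|y| * Real.sqrt |y|)| ≤ x * Real.sqrt x
    rw [abs_of_nonneg (by positivity)]
    nlinarith [abs_nonneg y, Real.sqrt_nonneg x]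
  have hlhs_real : ENNReal.ofReal (∫ y in Ioo (-x) x, F y ∂μ)
      = ∫⁻ ω, (Ioo (-x) x).indicator (fun y => ENNReal.ofReal (F y)) ω ∂μ := by
    rw [ofReal_integral_eq_lintegral_ofReal hFint
      (Eventually.of_forall (fun y => by positivity))]
    rw [← lintegral_indicator measurableSet_Ioo]
  -- RHS bound
  set B : ℝ → ℝ≥0∞ := (Ioo (0:ℝ) x).indicator
      (fun t => ENNReal.ofReal (Hf μ t * ((3:ℝ)/2 * Real.sqrt t))) with hB
  have hB_meas : Measurable B := by
    apply Measurable.indicator _ measurableSet_Ioo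
    exact ((Hf_meas μ).mul (continuous_const.mul Real.continuous_sqrt).measurable).ennreal_ofReal
  have hRHS_le : ∫⁻ t in Ioi (0:ℝ), μ {a : ℝ | t < f a} * ENNReal.ofReal ((3:ℝ)/2 * Real.sqrt t)
      ≤ ∫⁻ t in Ioi (0:ℝ), B t := by
    apply setLIntegral_mono hB_meas
    intro t ht
    rw [mem_Ioi] at ht
    rcases lt_or_ge t x with htx | htx
    · have hsub : μ {a : ℝ | t < f a} ≤ ENNReal.ofReal (Hf μ t) := by
        rw [Hf, ENNReal.ofReal_toReal (measure_ne_top μ _)]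
        apply measure_mono
        intro a ha
        rw [mem_setOf_eq] at ha ⊢
        by_cases hmem : a ∈ Ioo (-x) x
        · rw [hf] at ha; rw [Set.indicator_of_mem hmem] at ha; exact ha
        · rw [hf] at ha; rw [Set.indicator_of_notMem hmem] at ha; exact absurd ha (not_lt.mpr (le_of_lt ht))
      calc μ {a : ℝ | t < f a} * ENNReal.ofReal ((3:ℝ)/2 * Real.sqrt t)
          ≤ ENNReal.ofReal (Hf μ t) * ENNReal.ofReal ((3:ℝ)/2 * Real.sqrt t) :=
            mul_le_mul_left hsub _
      _ = ENNReal.ofReal (Hf μ t * ((3:ℝ)/2 * Real.sqrt t)) :=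
            (ENNReal.ofReal_mul (Hf_nonneg μ t)).symm
      _ = B t := by rw [hB, Set.indicator_of_mem (show t ∈ Ioo (0:ℝ) x from ⟨ht, htx⟩)]
    · have hempty : {a : ℝ | t < f a} = ∅ := by
        ext a
        simp only [mem_setOf_eq, mem_empty_iff_false, iff_false, not_lt]
        by_cases hmem : a ∈ Ioo (-x) x
        · rw [hf, Set.indicator_of_mem hmem]
          calc |a| ≤ x := by rw [abs_le]; exact ⟨le_of_lt hmem.1, le_of_lt hmem.2⟩
          _ ≤ t := htx
        · rw [hf, Set.indicator_of_notMem hmem]; exact le_of_lt ht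
      rw [hempty]
      simp
  have hRHS_eq : ∫⁻ t in Ioi (0:ℝ), B t
      = ENNReal.ofReal (∫ t in Ioo (0:ℝ) x, Hf μ t * ((3:ℝ)/2 * Real.sqrt t)) := by
    rw [hB, lintegral_indicator measurableSet_Ioo, Measure.restrict_restrict measurableSet_Ioo,
      Set.inter_eq_left.mpr Ioo_subset_Ioi_self]
    rw [← ofReal_integral_eq_lintegral_ofReal]
    · apply integrableOn_of_bdd (by rw [Real.volume_Ioo]; exact ENNReal.ofReal_ne_top)
        measurableSet_Ioo ((Hf_meas μ).mul (continuous_const.mul Real.continuous_sqrt).measurable)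
        (M := (3:ℝ)/2 * Real.sqrt x)
      intro t ht
      have h1 := Hf_nonneg μ t
      have h2 := Hf_le_one μ t
      have h3 : Real.sqrt t ≤ Real.sqrt x := Real.sqrt_le_sqrt (le_of_lt ht.2)
      have h4 := Real.sqrt_nonneg t
      show |Hf μ t * ((3:ℝ)/2 * Real.sqrt t)| ≤ (3:ℝ)/2 * Real.sqrt x
      rw [abs_of_nonneg (mul_nonneg h1 (by positivity))]
      nlinarith
    · exact Eventually.of_forall (fun t => mul_nonneg (Hf_nonneg μ t) (by positivity))
  -- combine
  have hfinal : ENNReal.ofReal (∫ y in Ioo (-x) x, F y ∂μ)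
      ≤ ENNReal.ofReal (∫ t in Ioo (0:ℝ) x, Hf μ t * ((3:ℝ)/2 * Real.sqrt t)) := by
    rw [hlhs_real, ← hRHS_eq, key]
    exact hRHS_le
  have hle : ∫ y in Ioo (-x) x, F y ∂μ ≤ ∫ t in Ioo (0:ℝ) x, Hf μ t * ((3:ℝ)/2 * Real.sqrt t) := by
    have hnn : 0 ≤ ∫ t in Ioo (0:ℝ) x, Hf μ t * ((3:ℝ)/2 * Real.sqrt t) := by
      apply integral_nonneg
      intro t
      exact mul_nonneg (Hf_nonneg μ t) (by positivity)
    exact (ENNReal.ofReal_le_ofReal_iff hnn).mp hfinal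
  calc ∫ y in Ioo (-x) x, F y ∂μ
      ≤ ∫ t in Ioo (0:ℝ) x, Hf μ t * ((3:ℝ)/2 * Real.sqrt t) := hle
  _ = ∫ t in Ioo (0:ℝ) x, (3:ℝ)/2 * (Real.sqrt t * Hf μ t) := by
      apply setIntegral_congr_fun measurableSet_Ioo
      intro t _
      ring
  _ = (3:ℝ)/2 * ∫ t in Ioo (0:ℝ) x, Real.sqrt t * Hf μ t := by
      rw [integral_const_mul]
  _ = (3:ℝ)/2 * ∫ t in (0:ℝ)..x, Real.sqrt t * Hf μ t := by
      rw [intervalIntegral.integral_of_le (le_of_lt hx), integral_Ioc_eq_integral_Ioo]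
end J

/-- Under (Ha), with `ω_x'(θ) = -i E[X e^{iθX}; |X| < x]`:
`|ω_x'(θ)| = A(x)(1 + o(√(|θ|x)))` as `x → ∞`, uniformly for `|θ| > 1/x`. -/
theorem stmt18 (μ : Measure ℝ) [IsProbabilityMeasure μ]
    (hmean : ∫⁻ x, ENNReal.ofReal |x| ∂μ = ⊤)
    (hHa : HaCond μ) :
    ∀ ε : ℝ, 0 < ε → ∃ x₀ : ℝ, ∀ x ≥ x₀, ∀ θ : ℝ, 1 / x < |θ| →
      |‖(∫ y in {y : ℝ | |y| < x},
          (-Complex.I * y * Complex.exp (Complex.I * θ * y)) ∂μ)‖ - Af μ x|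
        ≤ ε * Real.sqrt (|θ| * x) * Af μ x := by
  intro ε hε
  set δ : ℝ := min (1/100) (ε/100) with hδdef
  have hδ0 : 0 < δ := lt_min (by norm_num) (by positivity)
  have hδ1 : δ ≤ 1/100 := min_le_left _ _
  have hδε : δ ≤ ε/100 := min_le_right _ _
  -- extract T₀ from (Ha)
  obtain ⟨T₁, hT₁⟩ := (eventually_atTop).mp (hHa.eventually_ge_atTop (1/δ))
  set T₀ : ℝ := max T₁ 1 with hT₀def
  have hT1 : 1 ≤ T₀ := le_max_right _ _
  have hHA : ∀ t, T₀ ≤ t → (t * Hf μ t ≤ δ * Af μ t ∧ 0 < Af μ t) := by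
    intro t ht
    have ht1 : (1:ℝ) ≤ t := le_trans hT1 ht
    have hr := hT₁ t (le_trans (le_max_left _ _) ht)
    have htH : 0 < t * Hf μ t := by
      rcases lt_or_eq_of_le (mul_nonneg (show (0:ℝ) ≤ t by linarith) (Hf_nonneg μ t)) with h | h
      · exact h
      · exfalso
        rw [← h] at hr
        rw [div_zero] at hr
        have : 0 < 1/δ := by positivity
        linarith
    have hr2 : 1/δ * (t * Hf μ t) ≤ Af μ t := by
      rw [le_div_iff₀ htH] at hr
      linarith [hr]
    constructor
    · calc t * Hf μ t = δ * (1/δ * (t * Hf μ t)) := by field_simp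
      _ ≤ δ * Af μ t := mul_le_mul_of_nonneg_left hr2 (le_of_lt hδ0)
    · calc (0:ℝ) < 1/δ * (t * Hf μ t) := by positivity
      _ ≤ Af μ t := hr2
  have hH : ∀ t, T₀ ≤ t → t * Hf μ t ≤ δ * Af μ t := fun t ht => (hHA t ht).1
  have hA : ∀ t, T₀ ≤ t → 0 < Af μ t := fun t ht => (hHA t ht).2
  have hq : (1:ℝ)/2 ≤ 1 - δ * Real.log 2 := by
    nlinarith [Real.log_two_lt_d9, Real.log_two_gt_d9]
  -- choose x₀
  have hc0 : (0:ℝ) < Af μ T₀ * T₀ ^ (8⁻¹ : ℝ) / 2 := by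
    have := hA T₀ (le_refl T₀)
    have : (0:ℝ) < T₀ ^ (8⁻¹ : ℝ) := Real.rpow_pos_of_pos (by linarith) _
    positivity
  have hev : ∀ᶠ x in atTop,
      9 * T₀ * T₀ / ε ≤ Af μ T₀ * T₀ ^ (8⁻¹ : ℝ) / 2 * x ^ ((3:ℝ)/8) := by
    have ht : Tendsto (fun x : ℝ => Af μ T₀ * T₀ ^ (8⁻¹ : ℝ) / 2 * x ^ ((3:ℝ)/8)) atTop atTop :=
      (tendsto_rpow_atTop (by norm_num : (0:ℝ) < 3/8)).const_mul_atTop hc0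
    exact ht.eventually_ge_atTop _
  obtain ⟨x₁, hx₁⟩ := eventually_atTop.mp hev
  refine ⟨max (max x₁ (2 * T₀)) T₀, ?_⟩
  intro x hx θ hθ
  have hxT : T₀ ≤ x := le_trans (le_max_right _ _) hx
  have hx2T : 2 * T₀ ≤ x := le_trans (le_trans (le_max_right _ _) (le_max_left _ _)) hx
  have hxx₁ : x₁ ≤ x := le_trans (le_trans (le_max_left _ _) (le_max_left _ _)) hx
  have hT00 : (0:ℝ) < T₀ := by linarith
  have hx0 : (0:ℝ) < x := by linarith
  have hAx : 0 < Af μ x := hA x hxT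
  have hθ0 : 0 < |θ| := lt_trans (by positivity) hθ
  have hθx1 : 1 ≤ |θ| * x := by
    rw [div_lt_iff₀ hx0] at hθ
    linarith
  have hsθx : 1 ≤ Real.sqrt (|θ| * x) := by
    nlinarith [Real.sq_sqrt (le_trans zero_le_one hθx1), Real.sqrt_nonneg (|θ| * x)]
  have hsplit : Real.sqrt (|θ| * x) = Real.sqrt |θ| * Real.sqrt x :=
    Real.sqrt_mul (abs_nonneg θ) x
  have hsx0 : 0 ≤ Real.sqrt x := Real.sqrt_nonneg x
  have hsθ0 : 0 ≤ Real.sqrt |θ| := Real.sqrt_nonneg |θ|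
  -- the set
  have hset : {y : ℝ | |y| < x} = Ioo (-x) x := by
    ext y; simp [abs_lt, mem_Ioo]
  set m : ℝ := ∫ y in Ioo (-x) x, y ∂μ with hm
  set g : ℂ := ∫ y in Ioo (-x) x, (-Complex.I * y * Complex.exp (Complex.I * θ * y)) ∂μ with hg
  -- integrability
  have hmeas1 : Measurable fun y : ℝ => -Complex.I * y * Complex.exp (Complex.I * θ * y) := by
    apply Measurable.mul
    · exact (Complex.measurable_ofReal.const_mul _)
    · apply Complex.measurable_exp.comp
      exact (Complex.measurable_ofReal.const_mul _)
  have hint1 : IntegrableOn (fun y : ℝ => -Complex.I * y * Complex.exp (Complex.I * θ * y))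
      (Ioo (-x) x) μ := by
    apply Measure.integrableOn_of_bounded (measure_ne_top μ _) hmeas1.aestronglyMeasurable
      (M := x)
    rw [ae_restrict_iff' measurableSet_Ioo]
    apply Eventually.of_forall
    intro y hy
    have h1 : ‖-Complex.I * y * Complex.exp (Complex.I * θ * y)‖
        = ‖-Complex.I * y‖ * ‖Complex.exp (Complex.I * θ * y)‖ := by
      rw [norm_mul]
    have h2 : ‖-Complex.I * y‖ = |y| := by
      simp
    have h3 : ‖Complex.exp (Complex.I * θ * y)‖ = 1 := by
      have : Complex.I * θ * y = ((θ * y : ℝ) : ℂ) * Complex.I := by push_cast; ring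
      rw [this, Complex.norm_exp_ofReal_mul_I]
    rw [h1, h2, h3, mul_one]
    rw [abs_le]
    exact ⟨le_of_lt hy.1, le_of_lt hy.2⟩
  have hint2 : IntegrableOn (fun y : ℝ => -Complex.I * (y : ℂ)) (Ioo (-x) x) μ := by
    apply Measure.integrableOn_of_bounded (measure_ne_top μ _)
      ((Complex.measurable_ofReal.const_mul _).aestronglyMeasurable) (M := x)
    rw [ae_restrict_iff' measurableSet_Ioo]
    apply Eventually.of_forall
    intro y hy
    have h2 : ‖-Complex.I * (y:ℂ)‖ = |y| := by
      simp
    rw [h2, abs_le]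
    exact ⟨le_of_lt hy.1, le_of_lt hy.2⟩
  have hmint : IntegrableOn (fun y : ℝ => y) (Ioo (-x) x) μ :=
    integrableOn_of_bdd (measure_ne_top μ _) measurableSet_Ioo measurable_id (M := x)
      (fun y hy => by rw [abs_le]; exact ⟨le_of_lt hy.1, le_of_lt hy.2⟩)
  have hFint : IntegrableOn (fun y : ℝ => |y| * Real.sqrt |y|) (Ioo (-x) x) μ := by
    apply integrableOn_of_bdd (measure_ne_top μ _) measurableSet_Ioo
      (measurable_abs.mul (Real.continuous_sqrt.measurable.comp measurable_abs))
      (M := x * Real.sqrt x)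
    intro y hy
    have hyx : |y| ≤ x := by rw [abs_le]; exact ⟨le_of_lt hy.1, le_of_lt hy.2⟩
    have h1 : Real.sqrt |y| ≤ Real.sqrt x := Real.sqrt_le_sqrt hyx
    have h2 : 0 ≤ Real.sqrt |y| := Real.sqrt_nonneg _
    show |(|y| * Real.sqrt |y|)| ≤ x * Real.sqrt x
    rw [abs_of_nonneg (by positivity)]
    nlinarith [abs_nonneg y, Real.sqrt_nonneg x]
  -- step 1
  have hIm : (∫ y in Ioo (-x) x, -Complex.I * (y:ℂ) ∂μ) = -Complex.I * (m : ℂ) := by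
    rw [MeasureTheory.integral_const_mul]
    congr 1
    exact integral_ofReal
  have step1 : ‖g - (-Complex.I * (m:ℂ))‖
      ≤ 2 * Real.sqrt |θ| * ∫ y in Ioo (-x) x, |y| * Real.sqrt |y| ∂μ := by
    rw [← hIm, hg, ← integral_sub hint1 hint2]
    calc ‖∫ y in Ioo (-x) x,
        (-Complex.I * y * Complex.exp (Complex.I * θ * y) - -Complex.I * y) ∂μ‖
        ≤ ∫ y in Ioo (-x) x,
          ‖-Complex.I * y * Complex.exp (Complex.I * θ * y) - -Complex.I * y‖ ∂μ :=
          norm_integral_le_integral_norm _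
    _ ≤ ∫ y in Ioo (-x) x, 2 * Real.sqrt |θ| * (|y| * Real.sqrt |y|) ∂μ := by
        apply integral_mono (hint1.sub hint2).norm (hFint.const_mul _)
        intro y
        exact integrand_bound θ y
    _ = 2 * Real.sqrt |θ| * ∫ y in Ioo (-x) x, |y| * Real.sqrt |y| ∂μ :=
        MeasureTheory.integral_const_mul _ _
  have step1' : ‖g - (-Complex.I * (m:ℂ))‖
      ≤ 3 * (T₀ * T₀) * Real.sqrt |θ| + 18 * δ * Real.sqrt (|θ| * x) * Af μ x := by
    have hJ := J_bound μ hx0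
    have hS := sqrtH_int hδ0 hδ1 hT1 hH hA hxT
    have hJ2 : ∫ y in Ioo (-x) x, |y| * Real.sqrt |y| ∂μ
        ≤ (3:ℝ)/2 * (T₀ * T₀ + 6 * δ * Real.sqrt x * Af μ x) := by
      apply hJ.trans
      apply mul_le_mul_of_nonneg_left hS (by norm_num)
    calc ‖g - (-Complex.I * (m:ℂ))‖
        ≤ 2 * Real.sqrt |θ| * ∫ y in Ioo (-x) x, |y| * Real.sqrt |y| ∂μ := step1
    _ ≤ 2 * Real.sqrt |θ| * ((3:ℝ)/2 * (T₀ * T₀ + 6 * δ * Real.sqrt x * Af μ x)) := by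
        apply mul_le_mul_of_nonneg_left hJ2 (by positivity)
    _ = 3 * (T₀ * T₀) * Real.sqrt |θ| + 18 * δ * (Real.sqrt |θ| * Real.sqrt x) * Af μ x := by
        ring
    _ = 3 * (T₀ * T₀) * Real.sqrt |θ| + 18 * δ * Real.sqrt (|θ| * x) * Af μ x := by
        rw [hsplit]
  -- step 2
  have step2 : |m - Af μ x| ≤ 8 * δ * Af μ x := by
    have h1 := m_close μ hx0
    have h2 : x / 2 * Hf μ (x/2) ≤ δ * Af μ (x/2) := hH (x/2) (by linarith)
    have h3 : (1 - δ * Real.log 2) * Af μ (x/2) ≤ Af μ x :=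
      gron_block hδ0 hδ1 hT1 hH hA (by linarith) (by linarith) (by linarith)
    have h4 : 0 < Af μ (x/2) := hA (x/2) (by linarith)
    have h5 : Af μ (x/2) ≤ 2 * Af μ x := by nlinarith
    have h6 : 2 * x * Hf μ (x/2) ≤ 8 * δ * Af μ x := by nlinarith [Hf_nonneg μ (x/2)]
    linarith
  -- combine
  have habsIm : ‖-Complex.I * (m:ℂ)‖ = |m| := by
    simp
  have hcomb : |‖g‖ - Af μ x|
      ≤ ‖g - (-Complex.I * (m:ℂ))‖ + |m - Af μ x| := by
    have t1 : |‖g‖ - ‖-Complex.I * (m:ℂ)‖|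
        ≤ ‖g - (-Complex.I * (m:ℂ))‖ :=
      abs_norm_sub_norm_le _ _
    have t2 : |(|m|) - Af μ x| ≤ |m - Af μ x| := by
      have := abs_abs_sub_abs_le_abs_sub m (Af μ x)
      rw [abs_of_pos hAx] at this
      exact this
    rw [habsIm] at t1
    calc |‖g‖ - Af μ x|
        = |(‖g‖ - |m|) + ((|m|) - Af μ x)| := by ring_nf
    _ ≤ |‖g‖ - (|m|)| + |(|m|) - Af μ x| := abs_add_le _ _
    _ ≤ ‖g - (-Complex.I * (m:ℂ))‖ + |m - Af μ x| := add_le_add t1 t2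
  -- final numeric assembly
  have hconst : 3 * (T₀ * T₀) * Real.sqrt |θ| ≤ ε/3 * Real.sqrt (|θ| * x) * Af μ x := by
    have hxlow := sqrtAf_lower hδ0 hδ1 hT1 hH hA hxT
    have h9 : 9 * T₀ * T₀ / ε ≤ Af μ T₀ * T₀ ^ (8⁻¹ : ℝ) / 2 * x ^ ((3:ℝ)/8) := hx₁ x hxx₁
    have h10 : 9 * T₀ * T₀ / ε ≤ Real.sqrt x * Af μ x := le_trans h9 hxlow
    have h11 : 3 * (T₀ * T₀) ≤ ε/3 * (Real.sqrt x * Af μ x) := by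
      rw [div_le_iff₀ hε] at h10
      nlinarith
    calc 3 * (T₀ * T₀) * Real.sqrt |θ| ≤ (ε/3 * (Real.sqrt x * Af μ x)) * Real.sqrt |θ| :=
          mul_le_mul_of_nonneg_right h11 hsθ0
    _ = ε/3 * (Real.sqrt |θ| * Real.sqrt x) * Af μ x := by ring
    _ = ε/3 * Real.sqrt (|θ| * x) * Af μ x := by rw [hsplit]
  have hmid : 18 * δ * Real.sqrt (|θ| * x) * Af μ x ≤ ε/3 * Real.sqrt (|θ| * x) * Af μ x := by
    have : 18 * δ ≤ ε/3 := by
      calc 18 * δ ≤ 18 * (ε/100) := by nlinarith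
      _ ≤ ε/3 := by linarith
    nlinarith [mul_nonneg (mul_nonneg (sub_nonneg.mpr this) (Real.sqrt_nonneg (|θ| * x))) (le_of_lt hAx)]
  have hlast : 8 * δ * Af μ x ≤ ε/3 * Real.sqrt (|θ| * x) * Af μ x := by
    have h8 : 8 * δ ≤ ε/3 := by
      calc 8 * δ ≤ 8 * (ε/100) := by nlinarith
      _ ≤ ε/3 := by linarith
    nlinarith [mul_nonneg (mul_nonneg (show (0:ℝ) ≤ ε/3 by positivity) (sub_nonneg.mpr hsθx)) (le_of_lt hAx), mul_le_mul_of_nonneg_right h8 (le_of_lt hAx)]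
  rw [hset]
  calc |‖g‖ - Af μ x|
      ≤ ‖g - (-Complex.I * (m:ℂ))‖ + |m - Af μ x| := hcomb
  _ ≤ (3 * (T₀ * T₀) * Real.sqrt |θ| + 18 * δ * Real.sqrt (|θ| * x) * Af μ x)
      + 8 * δ * Af μ x := add_le_add step1' step2
  _ ≤ (ε/3 * Real.sqrt (|θ| * x) * Af μ x + ε/3 * Real.sqrt (|θ| * x) * Af μ x)
      + ε/3 * Real.sqrt (|θ| * x) * Af μ x := add_le_add (add_le_add hconst hmid) hlast
  _ = ε * Real.sqrt (|θ| * x) * Af μ x := by ring
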